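/- arXiv:1810.08679 — 3 statements merged into one kernel-verified Lean document; each statement's English description precedes it below -/
import Mathlib

section
/- There exists a constant c > 0 such that for all real x ≥ 2, |(Ā ∖ A)_{≤x}| ≤ c·√x·(log x)². -/
/-- `A` is the set of primes `p` with `p ≡ 2 (mod 3)` such that there exist
`α, β, γ ≥ 1` and primes `q, r`, both coprime to `6`, with
`p + 1 = 2^α * 3^β * q` and `p - 1 = 2^γ * r`. -/
def A : Set ℕ :=
  {p | p.Prime ∧ p % 3 = 2 ∧ ∃ α β γ q r : ℕ,
    1 ≤ α ∧ 1 ≤ β ∧ 1 ≤ γ ∧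
    q.Prime ∧ r.Prime ∧ Nat.Coprime q 6 ∧ Nat.Coprime r 6 ∧
    p + 1 = 2 ^ α * 3 ^ β * q ∧ p - 1 = 2 ^ γ * r}

/-- `Abar` is the set of primes `p` with `p ≡ 2 (mod 3)` such that there exist
`α, β, γ, μ, ν ≥ 1` and primes `q, r`, both coprime to `6`, with
`p + 1 = 2^α * 3^β * q^μ` and `p - 1 = 2^γ * r^ν`. -/
def Abar : Set ℕ :=
  {p | p.Prime ∧ p % 3 = 2 ∧ ∃ α β γ μ ν q r : ℕ,
    1 ≤ α ∧ 1 ≤ β ∧ 1 ≤ γ ∧ 1 ≤ μ ∧ 1 ≤ ν ∧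
    q.Prime ∧ r.Prime ∧ Nat.Coprime q 6 ∧ Nat.Coprime r 6 ∧
    p + 1 = 2 ^ α * 3 ^ β * q ^ μ ∧ p - 1 = 2 ^ γ * r ^ ν}

/-!
If `p ∈ Ā \ A`, one of the exponents `μ, ν` is at least `2`, so `p + 1` or `p - 1` has the form
`n = 2^a * 3^b * q^m` with `q ≥ 5` prime and `m ≥ 2`. Such an `n` equals `k^2 * d * q^t` with
`k = 2^(a/2) * 3^(b/2) * q^(m/2)`, `d ∣ 6` and `t ≤ 1`. As `q ∣ k` and `q ≥ 5`, `q` is the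
largest prime factor of `k`, so `n` is determined by `(k, d, t)`, and `k ≤ √n`. Hence there are
at most `8 (√N + 1)` such `n ≤ N`, and `#(Ā \ A)_{≤x} = O(√x)`, stronger than the claim.
-/

def ThreeSmoothMulPrimePow : Set ℕ :=
  {n | ∃ a b m q : ℕ, q.Prime ∧ q.Coprime 6 ∧ 2 ≤ m ∧ n = 2 ^ a * 3 ^ b * q ^ m}

def sqMulLargestPrimeFactorPow (v : ℕ × ℕ × ℕ) : ℕ :=
  v.1 ^ 2 * v.2.1 * v.1.primeFactors.sup id ^ v.2.2

lemma primeFactors_sup_id_eq {n q : ℕ} (hq : q.Prime) (hqn : q ∣ n) (hn : n ≠ 0)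
    (h : ∀ p ∈ n.primeFactors, p ≤ q) : n.primeFactors.sup id = q :=
  le_antisymm (Finset.sup_le h) (Finset.le_sup (f := id) (Nat.mem_primeFactors.2 ⟨hq, hqn, hn⟩))

lemma primeFactors_sup_id_two_pow_mul_three_pow_mul_pow {a b c q : ℕ} (hq : q.Prime)
    (hq6 : q.Coprime 6) (hc : c ≠ 0) : (2 ^ a * 3 ^ b * q ^ c).primeFactors.sup id = q := by
  have hq5 : 5 ≤ q := by
    have h2 : q ≠ 2 := by rintro rfl; revert hq6; decide
    have h3 : q ≠ 3 := by rintro rfl; revert hq6; decide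
    have h4 : q ≠ 4 := by rintro rfl; exact absurd hq (by decide)
    have := hq.two_le
    omega
  refine primeFactors_sup_id_eq hq (dvd_mul_of_dvd_right (dvd_pow_self q hc) _)
    (by positivity) fun p hp => ?_
  obtain ⟨hp, hpn, -⟩ := Nat.mem_primeFactors.1 hp
  rcases hp.dvd_mul.1 hpn with h23 | hpq
  · rcases hp.dvd_mul.1 h23 with h2 | h3
    · rw [(Nat.prime_dvd_prime_iff_eq hp Nat.prime_two).1 (hp.dvd_of_dvd_pow h2)]; omega
    · rw [(Nat.prime_dvd_prime_iff_eq hp Nat.prime_three).1 (hp.dvd_of_dvd_pow h3)]; omega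
  · exact ((Nat.prime_dvd_prime_iff_eq hp hq).1 (hp.dvd_of_dvd_pow hpq)).le

lemma pow_eq_sq_mul_pow_mod_two {M : Type*} [Monoid M] (b : M) (n : ℕ) :
    b ^ n = (b ^ (n / 2)) ^ 2 * b ^ (n % 2) := by
  rw [← pow_mul, ← pow_add, Nat.div_add_mod']

lemma threeSmoothMulPrimePow_inter_Iic_subset (N : ℕ) :
    ThreeSmoothMulPrimePow ∩ Set.Iic N ⊆ sqMulLargestPrimeFactorPow ''
      ↑(Finset.range (N.sqrt + 1) ×ˢ Nat.divisors 6 ×ˢ Finset.range 2) := by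
  rintro _ ⟨⟨a, b, m, q, hq, hq6, hm, rfl⟩, hN⟩
  set k := 2 ^ (a / 2) * 3 ^ (b / 2) * q ^ (m / 2)
  set d := 2 ^ (a % 2) * 3 ^ (b % 2)
  have hd : d ∣ 2 ^ 1 * 3 ^ 1 :=
    mul_dvd_mul (pow_dvd_pow 2 (Nat.lt_succ_iff.1 (a.mod_lt two_pos)))
      (pow_dvd_pow 3 (Nat.lt_succ_iff.1 (b.mod_lt two_pos)))
  have hk : k.primeFactors.sup id = q :=
    primeFactors_sup_id_two_pow_mul_three_pow_mul_pow hq hq6 (by omega)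
  have hdecomp : sqMulLargestPrimeFactorPow (k, d, m % 2) = 2 ^ a * 3 ^ b * q ^ m := by
    rw [sqMulLargestPrimeFactorPow, hk, pow_eq_sq_mul_pow_mod_two 2 a,
      pow_eq_sq_mul_pow_mod_two 3 b, pow_eq_sq_mul_pow_mod_two q m]
    ring
  have hkN : k ^ 2 ≤ N := by
    refine le_trans ?_ (hdecomp ▸ hN : sqMulLargestPrimeFactorPow (k, d, m % 2) ≤ N)
    rw [sqMulLargestPrimeFactorPow, hk, mul_assoc]
    exact Nat.le_mul_of_pos_right _ (Nat.mul_pos (by positivity) (pow_pos hq.pos _))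
  refine ⟨(k, d, m % 2), ?_, hdecomp⟩
  simp only [Finset.coe_product, Set.mem_prod, Finset.mem_coe, Finset.mem_range,
    Nat.mem_divisors]
  exact ⟨Nat.lt_succ_of_le (Nat.le_sqrt'.2 hkN), ⟨hd, by norm_num⟩, m.mod_lt two_pos⟩

lemma ncard_threeSmoothMulPrimePow_inter_Iic_le (N : ℕ) :
    (ThreeSmoothMulPrimePow ∩ Set.Iic N).ncard ≤ 8 * (N.sqrt + 1) := by
  calc (ThreeSmoothMulPrimePow ∩ Set.Iic N).ncard
      ≤ (sqMulLargestPrimeFactorPow ''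
          ↑(Finset.range (N.sqrt + 1) ×ˢ Nat.divisors 6 ×ˢ Finset.range 2)).ncard :=
        Set.ncard_le_ncard (threeSmoothMulPrimePow_inter_Iic_subset N)
          ((Finset.finite_toSet _).image _)
    _ ≤ (Finset.range (N.sqrt + 1) ×ˢ Nat.divisors 6 ×ˢ Finset.range 2).card := by
        rw [← Set.ncard_coe_finset]; exact Set.ncard_image_le (Finset.finite_toSet _)
    _ = 8 * (N.sqrt + 1) := by
        rw [Finset.card_product, Finset.card_product, Finset.card_range, Finset.card_range,
          show (Nat.divisors 6).card = 4 by decide]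
        ring

lemma add_one_mem_or_sub_one_mem_of_mem_Abar_diff_A {p : ℕ} (hp : p ∈ Abar \ A) :
    p + 1 ∈ ThreeSmoothMulPrimePow ∨ p - 1 ∈ ThreeSmoothMulPrimePow := by
  obtain ⟨⟨hpp, hp3, α, β, γ, μ, ν, q, r, hα, hβ, hγ, hμ, hν, hq, hr, hq6, hr6, hplus,
    hminus⟩, hA⟩ := hp
  by_cases hμ2 : 2 ≤ μ
  · exact .inl ⟨α, β, μ, q, hq, hq6, hμ2, hplus⟩
  by_cases hν2 : 2 ≤ ν
  · exact .inr ⟨γ, 0, ν, r, hr, hr6, hν2, by rw [hminus, pow_zero, mul_one]⟩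
  obtain rfl : μ = 1 := by omega
  obtain rfl : ν = 1 := by omega
  exact absurd ⟨hpp, hp3, α, β, γ, q, r, hα, hβ, hγ, hq, hr, hq6, hr6,
    by rw [hplus, pow_one], by rw [hminus, pow_one]⟩ hA

lemma Abar_diff_A_inter_Iic_subset (N : ℕ) :
    (Abar \ A) ∩ Set.Iic N ⊆ (· - 1) '' (ThreeSmoothMulPrimePow ∩ Set.Iic (N + 1)) ∪
      (· + 1) '' (ThreeSmoothMulPrimePow ∩ Set.Iic N) := by
  rintro p ⟨hp, hpN : p ≤ N⟩
  have hp1 : 1 ≤ p := hp.1.1.one_le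
  rcases add_one_mem_or_sub_one_mem_of_mem_Abar_diff_A hp with h | h
  · exact .inl ⟨p + 1, ⟨h, Nat.add_le_add_right hpN 1⟩, Nat.add_sub_cancel p 1⟩
  · exact .inr ⟨p - 1, ⟨h, Set.mem_Iic.2 (by omega)⟩, Nat.sub_add_cancel hp1⟩

lemma ncard_Abar_diff_A_inter_Iic_le (N : ℕ) :
    ((Abar \ A) ∩ Set.Iic N).ncard ≤ 16 * ((N + 1).sqrt + 1) := by
  have hfin (M : ℕ) : (ThreeSmoothMulPrimePow ∩ Set.Iic M).Finite :=
    (Set.finite_Iic M).inter_of_right _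
  calc ((Abar \ A) ∩ Set.Iic N).ncard
      ≤ ((· - 1) '' (ThreeSmoothMulPrimePow ∩ Set.Iic (N + 1)) ∪
          (· + 1) '' (ThreeSmoothMulPrimePow ∩ Set.Iic N)).ncard :=
        Set.ncard_le_ncard (Abar_diff_A_inter_Iic_subset N)
          (((hfin _).image _).union ((hfin _).image _))
    _ ≤ (ThreeSmoothMulPrimePow ∩ Set.Iic (N + 1)).ncard +
          (ThreeSmoothMulPrimePow ∩ Set.Iic N).ncard :=
        (Set.ncard_union_le _ _).trans
          (add_le_add (Set.ncard_image_le (hfin _)) (Set.ncard_image_le (hfin _)))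
    _ ≤ 8 * ((N + 1).sqrt + 1) + 8 * (N.sqrt + 1) :=
        add_le_add (ncard_threeSmoothMulPrimePow_inter_Iic_le _)
          (ncard_threeSmoothMulPrimePow_inter_Iic_le _)
    _ ≤ 16 * ((N + 1).sqrt + 1) := by
        have := Nat.sqrt_le_sqrt (Nat.le_add_right N 1)
        omega

lemma natSqrt_floor_add_one_le {x : ℝ} (hx : 1 ≤ x) :
    ((⌊x⌋₊ + 1).sqrt : ℝ) ≤ 2 * √x := by
  have hx0 : 0 ≤ x := zero_le_one.trans hx
  have hsq : (((⌊x⌋₊ + 1).sqrt ^ 2 : ℕ) : ℝ) ≤ ((⌊x⌋₊ + 1 : ℕ) : ℝ) :=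
    Nat.cast_le.2 (Nat.sqrt_le' _)
  push_cast at hsq
  rw [show 2 * √x = √(2 ^ 2 * x) by rw [Real.sqrt_mul' _ hx0, Real.sqrt_sq two_pos.le]]
  exact Real.le_sqrt_of_sq_le (by linarith [Nat.floor_le hx0])

theorem Abar_diff_A_small :
    ∃ c : ℝ, 0 < c ∧ ∀ x : ℝ, 2 ≤ x →
      (((Abar \ A) ∩ {n : ℕ | (n : ℝ) ≤ x}).ncard : ℝ) ≤
        c * Real.sqrt x * (Real.log x) ^ 2 := by
  have hlog2 : 0 < Real.log 2 := Real.log_pos one_lt_two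
  refine ⟨48 / Real.log 2 ^ 2, by positivity, fun x hx => ?_⟩
  have hIic : {n : ℕ | (n : ℝ) ≤ x} = Set.Iic ⌊x⌋₊ := by
    ext n; exact (Nat.le_floor_iff (by linarith : (0 : ℝ) ≤ x)).symm
  have hsqrt : 1 ≤ √x := Real.one_le_sqrt.2 (by linarith)
  have hlog : Real.log 2 ^ 2 ≤ Real.log x ^ 2 :=
    pow_le_pow_left₀ hlog2.le (Real.log_le_log two_pos hx) 2
  rw [hIic]
  calc (((Abar \ A) ∩ Set.Iic ⌊x⌋₊).ncard : ℝ)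
      ≤ 16 * (((⌊x⌋₊ + 1).sqrt : ℝ) + 1) := by
        exact_mod_cast ncard_Abar_diff_A_inter_Iic_le ⌊x⌋₊
    _ ≤ 48 * √x := by linarith [natSqrt_floor_add_one_le (x := x) (by linarith)]
    _ ≤ 48 / Real.log 2 ^ 2 * √x * Real.log x ^ 2 := by
        rw [div_mul_eq_mul_div, div_mul_eq_mul_div, le_div_iff₀ (by positivity)]
        exact mul_le_mul_of_nonneg_left hlog (by positivity)
end

section
/- There exist a constant c > 0 and x₀ such that for all real x ≥ x₀, the sum of |A^{1,β,γ}_{≤x}| over all pairs of integers (β, γ) with β ≥ 1, γ ≥ 2 and (log x)⁶ < 3^β·2^γ ≤ x is at most c·x/(log x)⁴. -/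
/-!
All primes in `A^{α,β,γ}_{≤x}` satisfy `p ≡ -1 (mod 3^β)` and `p ≡ 1 (mod 2^γ)`, so they lie in a
single residue class modulo `3^β 2^γ` and there are at most `2x / (3^β 2^γ) < 2x / (log x)^6` of
them. Every pair `(β, γ)` in the sum has `β, γ ≤ log₂ x`, so there are at most `(3 log x)^2` terms.
-/

open scoped Classical

/-- `A^{α,β,γ}_{≤x}`: the set of primes `p ≤ x` with `p ≡ 2 (mod 3)` for which there
exist primes `q, r`, both coprime to `6`, with `p + 1 = 2^α 3^β q` and `p - 1 = 2^γ r`. -/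
def Aabg (α β γ : ℕ) (x : ℝ) : Set ℕ :=
  {p | p.Prime ∧ (p : ℝ) ≤ x ∧ p % 3 = 2 ∧ ∃ q r : ℕ,
    q.Prime ∧ r.Prime ∧ Nat.Coprime q 6 ∧ Nat.Coprime r 6 ∧
    p + 1 = 2 ^ α * 3 ^ β * q ∧ p - 1 = 2 ^ γ * r}

theorem Set.ncard_le_div_add_one_of_modEq {S : Set ℕ} {N n : ℕ}
    (hS : ∀ p ∈ S, ∀ q ∈ S, p ≡ q [MOD N]) (hle : ∀ p ∈ S, p ≤ n) :
    S.ncard ≤ n / N + 1 := by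
  have hinj : S.InjOn (· / N) := fun p hp q hq hdiv => by
    rw [← Nat.div_add_mod p N, ← Nat.div_add_mod q N, show p / N = q / N from hdiv,
      show p % N = q % N from hS p hp q hq]
  have hmaps : ∀ p ∈ S, p / N ∈ (Finset.range (n / N + 1) : Set ℕ) := fun p hp => by
    simpa [Nat.lt_succ_iff] using Nat.div_le_div_right (hle p hp)
  simpa using Set.ncard_le_ncard_of_injOn _ hmaps hinj

theorem Aabg_modEq {α β γ : ℕ} {x : ℝ} {p q : ℕ} (hp : p ∈ Aabg α β γ x)
    (hq : q ∈ Aabg α β γ x) : p ≡ q [MOD 3 ^ β * 2 ^ γ] := by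
  obtain ⟨hp, -, -, a, b, -, -, -, -, hpa, hpb⟩ := hp
  obtain ⟨hq, -, -, c, d, -, -, -, -, hqc, hqd⟩ := hq
  refine (Nat.modEq_and_modEq_iff_modEq_mul (Nat.Coprime.pow β γ (by norm_num))).1 ⟨?_, ?_⟩
  · have hp3 : p + 1 ≡ 0 [MOD 3 ^ β] :=
      Nat.modEq_zero_iff_dvd.2 ⟨2 ^ α * a, by rw [hpa]; ring⟩
    have hq3 : q + 1 ≡ 0 [MOD 3 ^ β] :=
      Nat.modEq_zero_iff_dvd.2 ⟨2 ^ α * c, by rw [hqc]; ring⟩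
    exact (hp3.trans hq3.symm).add_right_cancel' 1
  · have hp2 : p - 1 ≡ 0 [MOD 2 ^ γ] := Nat.modEq_zero_iff_dvd.2 ⟨b, hpb⟩
    have hq2 : q - 1 ≡ 0 [MOD 2 ^ γ] := Nat.modEq_zero_iff_dvd.2 ⟨d, hqd⟩
    simpa [Nat.sub_add_cancel hp.one_le, Nat.sub_add_cancel hq.one_le] using
      (hp2.trans hq2.symm).add_right 1

theorem ncard_Aabg_le {α β γ : ℕ} {x : ℝ} (hx : (3 : ℝ) ^ β * 2 ^ γ ≤ x) :
    ((Aabg α β γ x).ncard : ℝ) ≤ 2 * x / ((3 : ℝ) ^ β * 2 ^ γ) := by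
  set N : ℕ := 3 ^ β * 2 ^ γ
  have hN : (N : ℝ) = (3 : ℝ) ^ β * 2 ^ γ := by push_cast [N]; rfl
  have hN1 : (1 : ℝ) ≤ N := Nat.one_le_cast.2 (Nat.one_le_iff_ne_zero.2 (by simp [N]))
  have hcount : (Aabg α β γ x).ncard ≤ ⌊x⌋₊ / N + 1 :=
    Set.ncard_le_div_add_one_of_modEq (fun p hp q hq => Aabg_modEq hp hq)
      (fun p hp => Nat.le_floor hp.2.1)
  have hx0 : 0 ≤ x := by linarith
  rw [← hN]
  calc ((Aabg α β γ x).ncard : ℝ) ≤ ((⌊x⌋₊ / N : ℕ) : ℝ) + 1 := by exact_mod_cast hcount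
    _ ≤ (⌊x⌋₊ : ℝ) / N + 1 := by gcongr; exact Nat.cast_div_le
    _ ≤ x / N + x / N := by
        gcongr
        · exact Nat.floor_le hx0
        · rwa [one_le_div (by linarith), hN]
    _ = 2 * x / N := by ring

theorem le_floor_logb_two_of_pow_le {b x : ℝ} {n : ℕ} (hb : 2 ≤ b) (h : b ^ n ≤ x) :
    n ≤ ⌊Real.logb 2 x⌋₊ := by
  have h2 : (2 : ℝ) ^ n ≤ x := (pow_le_pow_left₀ (by norm_num) hb n).trans h
  have hx : 0 < x := (pow_pos two_pos n).trans_le h2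
  exact Nat.le_floor ((Real.le_logb_iff_rpow_le one_lt_two hx).2 (by exact_mod_cast h2))

theorem floor_logb_two_add_one_le {x : ℝ} (hx : 1 ≤ Real.log x) :
    ((⌊Real.logb 2 x⌋₊ + 1 : ℕ) : ℝ) ≤ 3 * Real.log x := by
  have hlog2 : 1 / 2 < Real.log 2 := by linarith [Real.log_two_gt_d9]
  have hlogb : Real.logb 2 x ≤ 2 * Real.log x := by
    rw [Real.logb, div_le_iff₀ (by linarith)]
    nlinarith
  have hfloor := Nat.floor_le (a := Real.logb 2 x) (div_nonneg (by linarith) (by linarith))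
  push_cast
  linarith

theorem tsum_le_card_mul_of_eq_zero_of_notMem {ι : Type*} {f : ι → ℝ} {s : Finset ι} {M : ℝ}
    (hs : ∀ i ∉ s, f i = 0) (hf : ∀ i ∈ s, f i ≤ M) : ∑' i, f i ≤ s.card * M := by
  rw [tsum_eq_sum hs]
  simpa using Finset.sum_le_card_nsmul s f M hf

theorem tail_sum_bound :
    ∃ c : ℝ, 0 < c ∧ ∃ x₀ : ℝ, ∀ x : ℝ, x₀ ≤ x →
      (∑' bg : ℕ × ℕ,
        if 1 ≤ bg.1 ∧ 2 ≤ bg.2 ∧ (Real.log x) ^ 6 < (3 : ℝ) ^ bg.1 * 2 ^ bg.2 ∧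
            (3 : ℝ) ^ bg.1 * 2 ^ bg.2 ≤ x
        then ((Aabg 1 bg.1 bg.2 x).ncard : ℝ) else 0) ≤
      c * x / (Real.log x) ^ 4 := by
  refine ⟨18, by norm_num, Real.exp 1, fun x hx => ?_⟩
  have hlog : 1 ≤ Real.log x := (Real.le_log_iff_exp_le ((Real.exp_pos 1).trans_le hx)).2 hx
  have hx0 : 0 < x := (Real.exp_pos 1).trans_le hx
  have hlog0 : 0 < Real.log x := by linarith
  set B := ⌊Real.logb 2 x⌋₊ + 1
  refine (tsum_le_card_mul_of_eq_zero_of_notMem (s := Finset.range B ×ˢ Finset.range B)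
    (M := 2 * x / Real.log x ^ 6) ?_ ?_).trans ?_
  · rintro ⟨β, γ⟩ hβγ
    refine if_neg fun h => hβγ ?_
    simp only [Finset.mem_product, Finset.mem_range, B, Nat.lt_succ_iff]
    exact ⟨le_floor_logb_two_of_pow_le (b := 3) (by norm_num)
        ((le_mul_of_one_le_right (by positivity) (one_le_pow₀ (by norm_num))).trans h.2.2.2),
      le_floor_logb_two_of_pow_le le_rfl
        ((le_mul_of_one_le_left (by positivity) (one_le_pow₀ (by norm_num))).trans h.2.2.2)⟩
  · rintro ⟨β, γ⟩ -
    split_ifs with h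
    · exact (ncard_Aabg_le h.2.2.2).trans
        (div_le_div_of_nonneg_left (by positivity) (pow_pos hlog0 6) h.2.2.1.le)
    · positivity
  calc ((Finset.range B ×ˢ Finset.range B).card : ℝ) * (2 * x / Real.log x ^ 6)
      ≤ (3 * Real.log x) ^ 2 * (2 * x / Real.log x ^ 6) := by
        rw [Finset.card_product, Finset.card_range, Nat.cast_mul, ← sq]
        have hB := floor_logb_two_add_one_le hlog
        gcongr
    _ = 18 * x / Real.log x ^ 4 := by field_simp; ring
end

section
/- The number of primes p ≤ x for which there exist integers α, β ≥ 1, an integer μ ≥ 2 and a prime q with p + 1 = 2^α·3^β·q^μ is O(√x·(log x)²); that is, there is a constant c > 0 such that for all x ≥ 2 this count is at most c·√x·(log x)². -/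
/-!
Split `μ = 2k + ε` with `ε ∈ {0, 1}` and put `r = q ^ k`. Then `q = r.minFac`, so
`p + 1 = 2 ^ α * 3 ^ β * r ^ 2 * r.minFac ^ ε` is determined by the tuple `(α, β, r, ε)`.
For `p ≤ x` there are `O(log x)` choices for each of `α` and `β`, `O(√x)` for `r` and two for `ε`.
-/

theorem Nat.Prime.pow_eq_sq_mul_minFac_pow {q μ : ℕ} (hq : q.Prime) (hμ : 2 ≤ μ) :
    q ^ μ = (q ^ (μ / 2)) ^ 2 * (q ^ (μ / 2)).minFac ^ (μ % 2) := by
  rw [hq.pow_minFac (by omega), ← pow_mul, ← pow_add, Nat.mul_comm, Nat.div_add_mod]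

open Finset in
theorem ncard_pow_mul_pow_mul_prime_pow_le {a b : ℕ} (ha : 1 < a) (hb : 1 < b) (N : ℕ) :
    {m : ℕ | m ≤ N ∧ ∃ α β μ q : ℕ, 2 ≤ μ ∧ q.Prime ∧ m = a ^ α * b ^ β * q ^ μ}.ncard ≤
      (Nat.log a N + 1) * (Nat.log b N + 1) * (Nat.sqrt N + 1) * 2 := by
  set box := range (Nat.log a N + 1) ×ˢ range (Nat.log b N + 1) ×ˢ range (Nat.sqrt N + 1) ×ˢ
    range 2
  set code : ℕ × ℕ × ℕ × ℕ → ℕ := fun t =>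
    a ^ t.1 * b ^ t.2.1 * t.2.2.1 ^ 2 * t.2.2.1.minFac ^ t.2.2.2
  have hsub : {m : ℕ | m ≤ N ∧ ∃ α β μ q : ℕ, 2 ≤ μ ∧ q.Prime ∧ m = a ^ α * b ^ β * q ^ μ} ⊆
      box.image code := by
    rintro m ⟨hmN, α, β, μ, q, hμ, hq, rfl⟩
    have hm : 0 < a ^ α * b ^ β * q ^ μ := by have := hq.pos; positivity
    have haN : a ^ α ≤ N := (Nat.le_of_dvd hm ⟨b ^ β * q ^ μ, by ring⟩).trans hmN
    have hbN : b ^ β ≤ N := (Nat.le_of_dvd hm ⟨a ^ α * q ^ μ, by ring⟩).trans hmN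
    have hqN : q ^ μ ≤ N := (Nat.le_of_dvd hm ⟨a ^ α * b ^ β, by ring⟩).trans hmN
    have hdecomp := hq.pow_eq_sq_mul_minFac_pow hμ
    refine mem_image.mpr ⟨(α, β, q ^ (μ / 2), μ % 2), ?_, by rw [hdecomp]; ring⟩
    simp only [box, mem_product, mem_range, Nat.lt_succ_iff]
    refine ⟨Nat.le_log_of_pow_le ha haN, Nat.le_log_of_pow_le hb hbN,
      Nat.le_sqrt'.mpr ?_, Nat.le_of_lt_succ (Nat.mod_lt μ two_pos)⟩
    calc (q ^ (μ / 2)) ^ 2 ≤ q ^ μ := by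
          rw [hdecomp]; exact Nat.le_mul_of_pos_right _ (pow_pos (Nat.minFac_pos _) _)
      _ ≤ N := hqN
  calc _ ≤ (box.image code).card := by
        rw [← Set.ncard_coe_finset]; exact Set.ncard_le_ncard hsub
    _ ≤ box.card := card_image_le
    _ = _ := by simp only [box, card_product, card_range]; ring

theorem natLog_two_add_one_le_log {N : ℕ} {x : ℝ} (hN : 0 < N) (hx : 2 ≤ x)
    (hNx : (N : ℝ) ≤ 2 * x) : (Nat.log 2 N : ℝ) + 1 ≤ 5 * Real.log x := by
  have hlog2 := Real.log_two_gt_d9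
  have hlog2x : Real.log 2 ≤ Real.log x := Real.log_le_log two_pos hx
  have hlogN : Real.log N ≤ Real.log 2 + Real.log x := by
    rw [← Real.log_mul two_ne_zero (by positivity)]
    exact Real.log_le_log (by exact_mod_cast hN) hNx
  have hL : (Nat.log 2 N : ℝ) * Real.log 2 ≤ Real.log N := by
    have := Real.natLog_le_logb N 2
    rw [Real.logb, le_div_iff₀ (by positivity)] at this
    exact_mod_cast this
  nlinarith

theorem natSqrt_add_one_le_sqrt {N : ℕ} {x : ℝ} (hx : 1 ≤ x) (hNx : (N : ℝ) ≤ 2 * x) :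
    (Nat.sqrt N : ℝ) + 1 ≤ 3 * √x := by
  have hsqrt2 : √2 ≤ 2 := by
    rw [Real.sqrt_le_left (by norm_num)]; norm_num
  calc (Nat.sqrt N : ℝ) + 1 ≤ √(2 * x) + √x := by
        gcongr
        · exact Real.nat_sqrt_le_real_sqrt.trans (Real.sqrt_le_sqrt hNx)
        · exact Real.one_le_sqrt.mpr hx
    _ = √2 * √x + √x := by rw [Real.sqrt_mul zero_le_two]
    _ ≤ 3 * √x := by nlinarith [Real.sqrt_nonneg x]

theorem count_higher_power_small :
    ∃ c : ℝ, 0 < c ∧ ∀ x : ℝ, 2 ≤ x →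
      ((Set.ncard {p : ℕ | p.Prime ∧ (p : ℝ) ≤ x ∧ ∃ α β μ q : ℕ,
          1 ≤ α ∧ 1 ≤ β ∧ 2 ≤ μ ∧ q.Prime ∧ p + 1 = 2 ^ α * 3 ^ β * q ^ μ}) : ℝ) ≤
        c * Real.sqrt x * (Real.log x) ^ 2 := by
  refine ⟨150, by norm_num, fun x hx => ?_⟩
  set N := ⌊x⌋₊ + 1
  have hNx : (N : ℝ) ≤ 2 * x := by
    have := Nat.floor_le (zero_le_two.trans hx); push_cast [N]; linarith
  have hshift : Set.ncard {p : ℕ | p.Prime ∧ (p : ℝ) ≤ x ∧ ∃ α β μ q : ℕ,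
        1 ≤ α ∧ 1 ≤ β ∧ 2 ≤ μ ∧ q.Prime ∧ p + 1 = 2 ^ α * 3 ^ β * q ^ μ} ≤
      {m : ℕ | m ≤ N ∧ ∃ α β μ q : ℕ, 2 ≤ μ ∧ q.Prime ∧ m = 2 ^ α * 3 ^ β * q ^ μ}.ncard := by
    refine Set.ncard_le_ncard_of_injOn (· + 1) ?_ (fun _ _ _ _ h => Nat.succ_injective h)
      ((Set.finite_Iic N).subset fun m hm => hm.1)
    rintro p ⟨-, hpx, α, β, μ, q, -, -, hμ, hq, hp⟩
    exact ⟨Nat.succ_le_succ (Nat.le_floor hpx), α, β, μ, q, hμ, hq, hp⟩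
  have hL2 : (Nat.log 2 N : ℝ) + 1 ≤ 5 * Real.log x :=
    natLog_two_add_one_le_log (Nat.zero_lt_succ _) hx hNx
  have hL3 : (Nat.log 3 N : ℝ) + 1 ≤ 5 * Real.log x :=
    le_trans (by gcongr <;> norm_num) hL2
  have hlog : 0 ≤ Real.log x := Real.log_nonneg (by linarith)
  have hR := natSqrt_add_one_le_sqrt (one_le_two.trans hx) hNx
  calc _ ≤ (((Nat.log 2 N + 1) * (Nat.log 3 N + 1) * (Nat.sqrt N + 1) * 2 : ℕ) : ℝ) := by
        exact_mod_cast hshift.trans (ncard_pow_mul_pow_mul_prime_pow_le one_lt_two (by norm_num) N)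
    _ = ((Nat.log 2 N : ℝ) + 1) * ((Nat.log 3 N : ℝ) + 1) * ((Nat.sqrt N : ℝ) + 1) * 2 := by
        push_cast; ring
    _ ≤ (5 * Real.log x) * (5 * Real.log x) * (3 * √x) * 2 := by gcongr
    _ = 150 * √x * Real.log x ^ 2 := by ring
end
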